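/- arXiv:1509.00255 — 2 statements merged into one kernel-verified Lean document; each statement's English description precedes it below -/
import Mathlib

section
/- For every rational r = p/q in lowest terms with 0 < r < 1, there exist exactly q distinct cyclically balanced binary words of length q containing exactly p ones. -/
open Filter Topology

/-- The space of one-sided binary sequences. -/
abbrev Sigma2 := ℕ → Bool

/-- The one-sided shift map. -/
def shift (x : Sigma2) : Sigma2 := fun n => x (n + 1)

/-- Strict lexicographic order on sequences. -/
def lexLt (x y : Sigma2) : Prop := ∃ k, (∀ i < k, x i = y i) ∧ x k < y k

/-- Lexicographic order on sequences. -/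
def lexLe (x y : Sigma2) : Prop := x = y ∨ lexLt x y

open Classical in
/-- The metric on `Sigma2`: `2^{-j}` where `j` is the (1-indexed) first disagreement. -/
noncomputable def dS (x y : Sigma2) : ℝ :=
  if x = y then 0 else (2 : ℝ)⁻¹ ^ (sInf {i | x i ≠ y i} + 1)

/-- Product metric on `Sigma2 × Sigma2`. -/
noncomputable def d2 (p q : Sigma2 × Sigma2) : ℝ :=
  Real.sqrt (dS p.1 q.1 ^ 2 + dS p.2 q.2 ^ 2)

/-- Number of 1's in a word. -/
def ones (w : List Bool) : ℕ := w.count true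

/-- A word is balanced if any two factors of the same length (≥ 2) have numbers of 1's
differing by at most one. -/
def BalancedWord (w : List Bool) : Prop :=
  ∀ u v : List Bool, u <:+: w → v <:+: w → u.length = v.length →
    2 ≤ u.length → ((ones u : ℤ) - ones v).natAbs ≤ 1

/-- A word is cyclically balanced if its square is balanced. -/
def CycBalanced (w : List Bool) : Prop := BalancedWord (w ++ w)

/-- The periodic sequence `w^∞`. -/
def perSeq (w : List Bool) : Sigma2 := fun n => w.getD (n % w.length) false

/-- The sequence `w x` obtained by prepending the word `w` to the sequence `x`. -/
def wordSeq (w : List Bool) (x : Sigma2) : Sigma2 :=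
  fun n => if n < w.length then w.getD n false else x (n - w.length)

/-- A Parry sequence: starts with 1 and dominates all its shifts. -/
def Parry (α : Sigma2) : Prop := α 0 = true ∧ ∀ n, lexLe (shift^[n] α) α

/-- An admissible pair in the lexicographic world. -/
def Admissible (α β : Sigma2) : Prop :=
  Parry α ∧ Parry (fun n => !β n) ∧
    ∀ n, lexLe β (shift^[n] α) ∧ lexLe (shift^[n] β) α

/-- The lexicographic subshift `Σ_(α,β)`. -/
def lexSubshift (α β : Sigma2) : Set Sigma2 :=
  {x | ∀ n, lexLe β (shift^[n] x) ∧ lexLe (shift^[n] x) α}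

/-- Sum of lengths of the first `m` blocks. -/
def blockSum (b : ℕ → List Bool) (m : ℕ) : ℕ := ∑ i ∈ Finset.range m, (b i).length

/-- The infinite concatenation of a sequence of blocks. -/
noncomputable def flatten (b : ℕ → List Bool) : Sigma2 :=
  fun n => (b (sInf {m | n < blockSum b (m + 1)})).getD
    (n - blockSum b (sInf {m | n < blockSum b (m + 1)})) false

/-- The substitution `0 ↦ w0`, `1 ↦ w1` acting on sequences. -/
noncomputable def subst (w0 w1 : List Bool) (x : Sigma2) : Sigma2 :=
  flatten (fun i => if x i = true then w1 else w0)

/-- The renewal system `{ω,ν}^∞`: all infinite free concatenations of `ω` and `ν`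
together with their shifts. -/
def Renewal (ω ν : List Bool) : Set Sigma2 :=
  {x | ∃ (b : ℕ → List Bool) (k : ℕ), (∀ i, b i = ω ∨ b i = ν) ∧ x = shift^[k] (flatten b)}

/-- Number of words of length `n` occurring in sequences of `X`. -/
noncomputable def wordCount (X : Set Sigma2) (n : ℕ) : ℕ :=
  Set.ncard {w : List Bool | w.length = n ∧
    ∃ x ∈ X, ∃ k, w = List.ofFn (fun i : Fin n => x (k + i))}

/-- Topological entropy of a subshift, via exponential growth of word counts
(base-`e` logarithm). -/
noncomputable def entropy (X : Set Sigma2) : ℝ :=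
  Filter.limsup (fun n => Real.log (wordCount X n) / n) Filter.atTop

/-- The subshift avoiding a set of forbidden words. -/
def forbids (F : Set (List Bool)) : Set Sigma2 :=
  {x | ∀ w ∈ F, ∀ k, w ≠ List.ofFn (fun i : Fin w.length => x (k + i))}

/-- A subshift of finite type. -/
def IsSFT (X : Set Sigma2) : Prop := ∃ F : Finset (List Bool), X = forbids ↑F

/-- Cyclic rotation of a word. -/
def rot (w : List Bool) (k : ℕ) : List Bool := w.drop k ++ w.take k

/-- `w` is the lexicographically largest cyclic permutation of itself starting with 0. -/
def ZeroMaxWord (w : List Bool) : Prop :=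
  w ≠ [] ∧ w.headI = false ∧
    ∀ k < w.length, (rot w k).headI = false → lexLe (perSeq (rot w k)) (perSeq w)

/-- `w` is the lexicographically smallest cyclic permutation of itself starting with 1. -/
def OneMinWord (w : List Bool) : Prop :=
  w ≠ [] ∧ w.headI = true ∧
    ∀ k < w.length, (rot w k).headI = true → lexLe (perSeq w) (perSeq (rot w k))

/-- The combinatorial conditions on the words of an associated pair of a renormalisation. -/
def AssocWords (ω ν : List Bool) : Prop :=
  ZeroMaxWord ω ∧ OneMinWord ν ∧
  (∀ k < ν.length, (rot ν k).headI = false → lexLt (perSeq (rot ν k)) (perSeq ω)) ∧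
  (∀ k < ω.length, (rot ω k).headI = true → lexLt (perSeq ν) (perSeq (rot ω k))) ∧
  3 ≤ ω.length + ν.length

/-- `(α,β)` is renormalisable by the words `ω`, `ν`: both `0α` and `1β` are infinite free
concatenations of `ω` and `ν`, starting with `ω` resp. `ν`. -/
def RenormalisableBy (α β : Sigma2) (ω ν : List Bool) : Prop :=
  AssocWords ω ν ∧
  (∃ b : ℕ → List Bool, b 0 = ω ∧ (∀ i, b i = ω ∨ b i = ν) ∧ wordSeq [false] α = flatten b) ∧
  (∃ b : ℕ → List Bool, b 0 = ν ∧ (∀ i, b i = ω ∨ b i = ν) ∧ wordSeq [true] β = flatten b)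

def Renormalisable (α β : Sigma2) : Prop := ∃ ω ν, RenormalisableBy α β ω ν

def PeriodicSeq (x : Sigma2) : Prop := ∃ k, 1 ≤ k ∧ ∀ n, x (n + k) = x n

/-- An essential pair: admissible, not renormalisable, both coordinates periodic. -/
def EssentialPair (α β : Sigma2) : Prop :=
  Admissible α β ∧ ¬ Renormalisable α β ∧ PeriodicSeq α ∧ PeriodicSeq β

/-- `(ω,ν)` is the associated pair of some essential pair `(α,β)`,
i.e. `0α = ω^∞` and `1β = ν^∞`. -/
def AssociatedOfEssential (ω ν : List Bool) : Prop :=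
  ∃ α β : Sigma2, EssentialPair α β ∧ AssocWords ω ν ∧
    wordSeq [false] α = perSeq ω ∧ wordSeq [true] β = perSeq ν

/-- The product of lexicographic intervals `[ω^∞, ων^∞] × [νω^∞, ν^∞]`
(in the `(0α,1β)` coordinates). -/
def B0set (ω ν : List Bool) : Set (Sigma2 × Sigma2) :=
  {p | lexLe (perSeq ω) p.1 ∧ lexLe p.1 (wordSeq ω (perSeq ν)) ∧
       lexLe (wordSeq ν (perSeq ω)) p.2 ∧ lexLe p.2 (perSeq ν)}

/-- The 0-renormalisation box `B⁰(ω,ν)`: admissible pairs `(α,β)` with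
`(0α,1β)` in the corresponding product of lexicographic intervals. -/
def B0Box (ω ν : List Bool) : Set (Sigma2 × Sigma2) :=
  {q | Admissible q.1 q.2 ∧ (wordSeq [false] q.1, wordSeq [true] q.2) ∈ B0set ω ν}

/-- Composition of a list of substitutions (head applied last). -/
noncomputable def compSub : List (List Bool × List Bool) → Sigma2 → Sigma2
  | [], x => x
  | p :: l, x => subst p.1 p.2 (compSub l x)

/-- `w = ξ_r`: the lexicographically largest cyclically balanced word of length `q`
with `p` ones starting with `0`, for `r = p/q`. -/
def IsXi (r : ℚ) (w : List Bool) : Prop :=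
  w.length = r.den ∧ (ones w : ℤ) = r.num ∧ CycBalanced w ∧ w.headI = false ∧
  ∀ v : List Bool, v.length = r.den → (ones v : ℤ) = r.num → CycBalanced v →
    v.headI = false → lexLe (perSeq v) (perSeq w)

/-- `w = ζ_r`: the lexicographically smallest cyclically balanced word of length `q`
with `p` ones starting with `1`, for `r = p/q`. -/
def IsZeta (r : ℚ) (w : List Bool) : Prop :=
  w.length = r.den ∧ (ones w : ℤ) = r.num ∧ CycBalanced w ∧ w.headI = true ∧
  ∀ v : List Bool, v.length = r.den → (ones v : ℤ) = r.num → CycBalanced v →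
    v.headI = true → lexLe (perSeq w) (perSeq v)

/-- The `n`-renormalisation box, given the list of substitution word pairs
`[(ξ_{r_n},ζ_{r_n}),…,(ξ_{r_1},ζ_{r_1})]`. -/
def BoxN (ps : List (List Bool × List Bool)) (ω ν : List Bool) : Set (Sigma2 × Sigma2) :=
  {q | Admissible q.1 q.2 ∧ ∃ p ∈ B0set ω ν,
    wordSeq [false] q.1 = compSub ps p.1 ∧ wordSeq [true] q.2 = compSub ps p.2}

/-- Closure of the orbit of a point under the shift. -/
def orbitClosure (x : Sigma2) : Set Sigma2 := closure {y | ∃ n, y = shift^[n] x}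

/-- A closed, completely invariant subset of the subshift `X`. -/
def InvClosed (X A : Set Sigma2) : Prop :=
  IsClosed A ∧ A ⊆ X ∧ shift '' A = A ∧ {x ∈ X | shift x ∈ A} = A

/-- The shift is topologically transitive on `A`. -/
def TransOn (A : Set Sigma2) : Prop :=
  ∀ U V : Set Sigma2, IsOpen U → IsOpen V → (U ∩ A).Nonempty → (V ∩ A).Nonempty →
    ∃ n, ((shift^[n]) '' (U ∩ A) ∩ V).Nonempty

/-- A transitive component of the subshift `X`: closed, completely invariant, topologically
transitive, and maximal among such sets containing a dense orbit. -/
def TransComp (X A : Set Sigma2) : Prop :=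
  InvClosed X A ∧ TransOn A ∧
    ∀ A', InvClosed X A' → (∃ x ∈ A', A' ⊆ orbitClosure x) → A ⊆ A' → A' = A

/-!
The `q` words are the rotations of the lower mechanical word of slope `p/q`: the words whose
prefix of length `i` contains `⌊(i p + c) / q⌋` ones, for a fixed `c < q`. They are balanced
because `⌊(x + y) / q⌋ - ⌊x / q⌋` takes only the values `⌊y / q⌋` and `⌊y / q⌋ + 1`, and they
are pairwise distinct because `p` is invertible modulo `q`.

Conversely, let `w` be cyclically balanced with prefix counts `f`. Averaging the number of ones
in the windows of length `n` of `w w` over the `q` starting points `i < q` gives exactly `n p`,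
and balance puts every window within one of every other; hence the discrepancy `q f(i) - i p`
varies by at most `q - 1` on `0 ≤ i ≤ q`. It therefore stays in a window `(c - q, c]` with
`0 ≤ c < q`, which says precisely that `f(i) = ⌊(i p + c) / q⌋`.
-/

open Finset

lemma abs_sum_le_card_sub_one {ι : Type*} {s : Finset ι} {a : ι → ℤ} {j : ι} (hj : j ∈ s)
    (hzero : a j = 0) (hle : ∀ i ∈ s, |a i| ≤ 1) : |∑ i ∈ s, a i| ≤ #s - 1 := by
  classical
  rw [← add_sum_erase s a hj, hzero, zero_add]
  calc |∑ i ∈ s.erase j, a i| ≤ ∑ i ∈ s.erase j, |a i| := abs_sum_le_sum_abs _ _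
    _ ≤ ∑ _i ∈ s.erase j, 1 := sum_le_sum fun i hi => hle i (mem_of_mem_erase hi)
    _ = #s - 1 := by
      rw [sum_const, card_erase_of_mem hj, nsmul_one, Nat.cast_pred (card_pos.2 ⟨j, hj⟩)]

lemma sum_range_sub_eq_of_add_period {G : Type*} [AddCommGroup G] (g : ℕ → G) (a : G)
    {q n : ℕ} (h : ∀ k < n, g (k + q) = g k + a) :
    ∑ k ∈ range q, (g (k + n) - g k) = n • a := by
  induction n with
  | zero => simp
  | succ n ih =>
    have htel : ∑ k ∈ range q, (g (k + (n + 1)) - g (k + n)) = a := by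
      simp_rw [← add_assoc, add_right_comm _ n 1]
      rw [sum_range_sub (fun k => g (k + n)) q, zero_add, add_comm q n, h n (by omega),
        add_sub_cancel_left]
    rw [succ_nsmul, ← ih fun k hk => h k (by omega), ← htel, ← sum_add_distrib]
    exact sum_congr rfl fun k _ => by abel

lemma abs_discrepancy_sub_le (f : ℕ → ℤ) (p : ℤ) {q : ℕ} (hq : 0 < q)
    (hper : ∀ k < q, f (k + q) = f k + p)
    (hbal : ∀ n ≤ q, ∀ i < q, ∀ j < q, f (i + n) - f i ≤ f (j + n) - f j + 1)
    {j k : ℕ} (hj : j ≤ q) (hk : k ≤ q) :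
    |(q * f k - k * p) - (q * f j - j * p)| ≤ q - 1 := by
  wlog hjk : j ≤ k generalizing j k
  · rw [abs_sub_comm]
    exact this hk hj (by omega)
  obtain ⟨n, rfl⟩ := Nat.exists_eq_add_of_le hjk
  rcases hj.eq_or_lt with rfl | hjq
  · obtain rfl : n = 0 := by omega
    simp only [add_zero, sub_self, abs_zero, sub_nonneg, Nat.one_le_cast]
    exact hq
  have hwindows : ∑ i ∈ range q, (f (i + n) - f i) = n * p := by
    rw [sum_range_sub_eq_of_add_period f p fun i hi => hper i (by omega), nsmul_eq_mul]
  have hsum : (q * f (j + n) - ↑(j + n) * p) - (q * f j - j * p)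
      = ∑ i ∈ range q, ((f (j + n) - f j) - (f (i + n) - f i)) := by
    rw [sum_sub_distrib, hwindows, sum_const, card_range, nsmul_eq_mul]
    push_cast
    ring
  rw [hsum]
  refine (abs_sum_le_card_sub_one (mem_range.2 hjq) (sub_self _) fun i hi =>
    abs_le.2 ⟨?_, ?_⟩).trans_eq (by rw [card_range])
  · linarith [hbal n (by omega) i (mem_range.1 hi) j hjq]
  · linarith [hbal n (by omega) j hjq i (mem_range.1 hi)]

lemma exists_forall_mem_Ioc_of_abs_sub_le (F : ℕ → ℤ) {q : ℕ} (hq : 0 < q) (h0 : F 0 = 0)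
    (h : ∀ j ≤ q, ∀ k ≤ q, |F k - F j| ≤ q - 1) :
    ∃ c : ℕ, c < q ∧ ∀ i ≤ q, F i ∈ Set.Ioc ((c : ℤ) - q) c := by
  obtain ⟨k₀, hk₀, hmin⟩ := (range (q + 1)).exists_min_image F nonempty_range_add_one
  have hk₀q : k₀ ≤ q := Nat.lt_succ_iff.1 (mem_range.1 hk₀)
  have hlow := (abs_le.1 (h 0 (Nat.zero_le q) k₀ hk₀q)).1
  have hup := hmin 0 (mem_range.2 (by omega))
  refine ⟨(F k₀ + q - 1).toNat, by omega, fun i hi => ?_⟩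
  have := hmin i (mem_range.2 (by omega))
  have := (abs_le.1 (h k₀ hk₀q i hi)).2
  exact Set.mem_Ioc.2 ⟨by omega, by omega⟩

lemma ones_take_add_one {l : List Bool} {i : ℕ} (hi : i < l.length) :
    ones (l.take (i + 1)) = ones (l.take i) + l[i].toNat := by
  rw [List.take_add_one, List.getElem?_eq_getElem hi]
  cases l[i] <;> simp [ones]

lemma ones_take_add (l : List Bool) (k n : ℕ) :
    ones (l.take (k + n)) = ones (l.take k) + ones ((l.drop k).take n) := by
  simp [ones, List.take_add, List.count_append]

lemma eq_of_ones_take_eq {u v : List Bool} (hlen : u.length = v.length)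
    (h : ∀ i ≤ u.length, ones (u.take i) = ones (v.take i)) : u = v := by
  refine List.ext_getElem hlen fun i hu hv => ?_
  have hsucc := h (i + 1) hu
  rw [ones_take_add_one hu, ones_take_add_one hv, h i hu.le, Nat.add_left_cancel_iff] at hsucc
  revert hsucc
  cases u[i] <;> cases v[i] <;> simp

lemma BalancedWord.ones_window_le {l : List Bool} (hl : BalancedWord l) {i j n : ℕ}
    (hi : i + n ≤ l.length) (hj : j + n ≤ l.length) :
    ones ((l.drop i).take n) ≤ ones ((l.drop j).take n) + 1 := by
  have hlen : ∀ k, k + n ≤ l.length → ((l.drop k).take n).length = n := fun k hk => by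
    simp only [List.length_take, List.length_drop]
    omega
  rcases Nat.lt_or_ge n 2 with hn | hn
  · have : ones ((l.drop i).take n) ≤ ((l.drop i).take n).length := List.count_le_length
    have := hlen i hi
    omega
  have hinfix : ∀ k, (l.drop k).take n <:+: l := fun k =>
    (List.take_prefix n _).isInfix.trans (List.drop_suffix k l).isInfix
  have := hl _ _ (hinfix i) (hinfix j) (by rw [hlen i hi, hlen j hj])
    (by rw [hlen i hi]; exact hn)
  omega

lemma ones_take_append_self_add_length (w : List Bool) {k : ℕ} (hk : k ≤ w.length) :
    ones ((w ++ w).take (k + w.length)) = ones ((w ++ w).take k) + ones w := by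
  rw [List.take_append, List.take_append_of_le_length hk, List.take_of_length_le (by omega),
    Nat.add_sub_cancel]
  simp [ones, List.count_append, add_comm]

/-- The lower mechanical word of slope `p / q` and intercept `c / q`, of length `n`. -/
def mechWord (p q c n : ℕ) : List Bool :=
  List.ofFn fun i : Fin n => decide ((i * p + c) / q < ((i + 1) * p + c) / q)

section MechanicalWord

variable {p q : ℕ}

@[simp]
lemma length_mechWord (p q c n : ℕ) : (mechWord p q c n).length = n := by
  simp [mechWord]

lemma mechWord_add (p q c m n : ℕ) :
    mechWord p q c (m + n) = mechWord p q c m ++ mechWord p q (c + m * p) n := by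
  unfold mechWord
  rw [List.ofFn_add]
  congr 2
  ext i
  simp only [Fin.val_natAdd]
  ring_nf

lemma mechWord_add_mul_self (p q c n : ℕ) : mechWord p q (c + q * p) n = mechWord p q c n := by
  rcases q.eq_zero_or_pos with rfl | hq
  · simp
  unfold mechWord
  congr 1
  ext i
  rw [← add_assoc, ← add_assoc, Nat.add_mul_div_left _ _ hq, Nat.add_mul_div_left _ _ hq]
  simp

lemma take_mechWord {c m n : ℕ} (h : m ≤ n) :
    (mechWord p q c n).take m = mechWord p q c m := by
  obtain ⟨k, rfl⟩ := Nat.exists_eq_add_of_le h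
  rw [mechWord_add, List.take_left' (length_mechWord p q c m)]

lemma ones_mechWord (hpq : p ≤ q) (c n : ℕ) :
    ones (mechWord p q c n) + c / q = (n * p + c) / q := by
  induction n with
  | zero => simp [mechWord, ones]
  | succ n ih =>
    have hstep : (n * p + c + p) / q ≤ (n * p + c) / q + 1 := by
      rcases q.eq_zero_or_pos with rfl | hq
      · simp
      calc (n * p + c + p) / q ≤ (n * p + c + q) / q := Nat.div_le_div_right (by omega)
        _ = (n * p + c) / q + 1 := Nat.add_div_right _ hq
    have hmono : (n * p + c) / q ≤ (n * p + c + p) / q := Nat.div_le_div_right (by omega)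
    have hletter : ones (mechWord p q (c + n * p) 1)
        = (if (n * p + c) / q < (n * p + c + p) / q then 1 else 0) := by
      simp only [mechWord, ones, List.ofFn_succ, List.ofFn_zero, Fin.val_zero, zero_mul, zero_add,
        one_mul]
      rw [add_comm c, add_comm p]
      split_ifs with hlt <;> simp [hlt]
    rw [mechWord_add, ones, List.count_append, ← ones, ← ones, hletter,
      show (n + 1) * p + c = n * p + c + p by ring]
    split_ifs <;> omega

lemma ones_mechWord_of_lt (hpq : p ≤ q) {c : ℕ} (hc : c < q) (n : ℕ) :
    ones (mechWord p q c n) = (n * p + c) / q := by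
  rw [← ones_mechWord hpq c n, Nat.div_eq_of_lt hc, add_zero]

lemma exists_eq_mechWord_of_isInfix {c n : ℕ} {u : List Bool} (hu : u <:+: mechWord p q c n) :
    ∃ s, u = mechWord p q (c + s * p) u.length := by
  obtain ⟨a, b, hab⟩ := hu
  have hn : n = a.length + (u.length + b.length) := by
    simpa [add_assoc] using (congrArg List.length hab).symm
  rw [hn, mechWord_add, mechWord_add, ← List.append_assoc] at hab
  obtain ⟨hau, -⟩ := List.append_inj hab (by simp)
  exact ⟨a.length, (List.append_inj hau (by simp)).2⟩

lemma ones_of_isInfix_mechWord (hpq : p ≤ q) {c n : ℕ} {u : List Bool}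
    (hu : u <:+: mechWord p q c n) :
    u.length * p / q ≤ ones u ∧ ones u ≤ u.length * p / q + 1 := by
  obtain ⟨s, hs⟩ := exists_eq_mechWord_of_isInfix hu
  have hones := ones_mechWord hpq (c + s * p) u.length
  rw [← hs] at hones
  have := Nat.div_add_div_le_add_div (x := u.length * p) (y := c + s * p) (z := q)
  have := Nat.add_div_le_div_add_div_add_one (u.length * p) (c + s * p) q
  omega

lemma balancedWord_mechWord (hpq : p ≤ q) (c n : ℕ) : BalancedWord (mechWord p q c n) := by
  intro u v hu hv huv _
  have hu' := ones_of_isInfix_mechWord hpq hu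
  have hv' := ones_of_isInfix_mechWord hpq hv
  rw [huv] at hu'
  omega

lemma cycBalanced_mechWord (hpq : p ≤ q) (c : ℕ) : CycBalanced (mechWord p q c q) := by
  have hsq := mechWord_add p q c q q
  rw [mechWord_add_mul_self] at hsq
  rw [CycBalanced, ← hsq]
  exact balancedWord_mechWord hpq c _

lemma mechWord_injOn (hpq : p ≤ q) (hco : p.Coprime q) :
    Set.InjOn (fun c => mechWord p q c q) (Set.Iio q) := by
  intro c hc c' hc' h
  rw [Set.mem_Iio] at hc hc'
  by_contra hne
  wlog hlt : c < c' generalizing c c'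
  · exact this hc' hc h.symm (Ne.symm hne) (by omega)
  -- at a position `m` where `m p + c'` is a multiple of `q`, the prefix counts differ
  obtain ⟨m, hm, hmod⟩ := Nat.exists_mul_mod_eq_of_coprime (q - c') hco (by omega)
  have hdvd : q ∣ m * p + c' := by
    apply Nat.dvd_of_mod_eq_zero
    rw [Nat.add_mod, mul_comm, hmod, Nat.mod_eq_of_lt (by omega : q - c' < q),
      Nat.mod_eq_of_lt hc', Nat.sub_add_cancel hc'.le, Nat.mod_self]
  have hprefix := congrArg (fun w => ones (w.take m)) h
  simp only [take_mechWord hm.le, ones_mechWord_of_lt hpq hc, ones_mechWord_of_lt hpq hc']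
    at hprefix
  exact (Nat.div_lt_div_of_lt_of_dvd hdvd (by omega)).ne hprefix

end MechanicalWord

theorem CycBalanced.exists_eq_mechWord {w : List Bool} {p q : ℕ} (hw : CycBalanced w)
    (hlen : w.length = q) (hones : ones w = p) (hq : 0 < q) :
    ∃ c < q, w = mechWord p q c q := by
  let f : ℕ → ℤ := fun k => ones ((w ++ w).take k)
  have hper : ∀ k < q, f (k + q) = f k + p := fun k hk => by
    have := ones_take_append_self_add_length w (k := k) (by omega)
    rw [hlen, hones] at this
    simp only [f, this, Nat.cast_add]
  have hbal : ∀ n ≤ q, ∀ i < q, ∀ j < q, f (i + n) - f i ≤ f (j + n) - f j + 1 := by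
    intro n hn i hi j hj
    have hlen2 : (w ++ w).length = q + q := by rw [List.length_append, hlen]
    have := hw.ones_window_le (i := i) (j := j) (n := n) (by omega) (by omega)
    simp only [f, ones_take_add]
    push_cast
    omega
  obtain ⟨c, hcq, hc⟩ := exists_forall_mem_Ioc_of_abs_sub_le (fun k => q * f k - k * p) hq
    (by simp [f, ones]) fun j hj k hk => abs_discrepancy_sub_le f p hq hper hbal hj hk
  have hpq : p ≤ q := hones ▸ hlen ▸ List.count_le_length
  refine ⟨c, hcq, eq_of_ones_take_eq (hlen.trans (length_mechWord p q c q).symm) fun i hi => ?_⟩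
  rw [hlen] at hi
  rw [take_mechWord hi, ones_mechWord_of_lt hpq hcq]
  have hfi : f i = ones (w.take i) := by simp [f, List.take_append_of_le_length (hlen ▸ hi)]
  obtain ⟨hlow, hup⟩ := hc i hi
  rw [hfi] at hlow hup
  refine (Nat.div_eq_of_lt_le ?_ ?_).symm
  · zify
    linarith
  · zify
    linarith

theorem stmt1_general (p q : ℕ) (hpq : p < q) (hco : Nat.Coprime p q) :
    Set.ncard {w : List Bool | w.length = q ∧ ones w = p ∧ CycBalanced w} = q := by
  have hset : {w : List Bool | w.length = q ∧ ones w = p ∧ CycBalanced w}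
      = (fun c => mechWord p q c q) '' Set.Iio q := by
    ext w
    simp only [Set.mem_ofPred_eq, Set.mem_image, Set.mem_Iio]
    constructor
    · rintro ⟨hlen, hones, hw⟩
      obtain ⟨c, hc, hwc⟩ := hw.exists_eq_mechWord hlen hones (by omega)
      exact ⟨c, hc, hwc.symm⟩
    · rintro ⟨c, hc, rfl⟩
      refine ⟨length_mechWord p q c q, ?_, cycBalanced_mechWord hpq.le c⟩
      rw [ones_mechWord_of_lt hpq.le hc, add_comm, Nat.add_mul_div_left _ _ (by omega),
        Nat.div_eq_of_lt hc, zero_add]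
  rw [hset, (mechWord_injOn hpq.le hco).ncard_image, ← coe_range, Set.ncard_coe_finset,
    card_range]

/-- for `r = p/q` in lowest terms, there are exactly `q` cyclically balanced
words of length `q` with `p` ones. -/
theorem stmt1 (p q : ℕ) (hp : 0 < p) (hpq : p < q) (hco : Nat.Coprime p q) :
    Set.ncard {w : List Bool | w.length = q ∧ ones w = p ∧ CycBalanced w} = q :=
  stmt1_general p q hpq hco
end

section
/- Let α ∈ Σ₂ with α₁ = 1 and α not a Parry sequence, and let ς(α) = (α₁…α_{n_α−1}0)^∞ where n_α = min{n : σⁿ(α) ≽ α}. Then ς(α) is a Parry sequence and the one-sided lexicographic subshifts satisfy Σ_(0^∞, α) = Σ_(0^∞, ς(α)), i.e., {x : σⁿ(x) ≼ α ∀n} = {x : σⁿ(x) ≼ ς(α) ∀n}. -/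
open Filter Topology

/-- `n_α = min { n ≥ 1 : σⁿ(α) ≽ α }`. -/
noncomputable def nAlpha (α : Sigma2) : ℕ := sInf {n | 1 ≤ n ∧ lexLe α (shift^[n] α)}

/-- `ς(α) = (α₁ … α_{n_α - 1} 0)^∞`. -/
noncomputable def varsigma (α : Sigma2) : Sigma2 :=
  perSeq ((List.ofFn fun i : Fin (nAlpha α - 1) => α i) ++ [false])

/-! Write `N = n_α`. By minimality of `N`, for `0 < j < N` the first letter where `σʲ α` falls
below `α` lies inside the block `α₀ … α_{N-1}` (else `σᴺ α ≺ σ^{N-j} α ≺ α`); for `j = N - 1`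
this says `α_{N-1} = 0`, so `ς(α)` is the `N`-periodization of `α`, and the same mismatches show
that it is Parry. Since `α ≼ σᴺ α`, the sequence `α` dominates its `N`-periodization, which gives
one inclusion; conversely, a sequence with a shift above the periodic `ς(α)` has a shift above
`α`, because `ς(α)` agrees with `α` on the first block. -/

open Function

theorem shift_iterate_apply (n : ℕ) (x : Sigma2) (m : ℕ) : shift^[n] x m = x (m + n) := by
  induction n generalizing x with
  | zero => rfl
  | succ n ih => rw [iterate_succ_apply, ih]; rfl

section LexOrder

variable {x y z : Sigma2}

theorem lexLe_iff_toLex_le : lexLe x y ↔ toLex x ≤ toLex y := Iff.rfl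

theorem not_lexLe : ¬ lexLe x y ↔ lexLt y x := by
  rw [lexLe_iff_toLex_le]
  exact not_le

theorem lexLe.trans (h₁ : lexLe x y) (h₂ : lexLe y z) : lexLe x z :=
  le_trans (α := Lex Sigma2) h₁ h₂

theorem lexLt.trans (h₁ : lexLt x y) (h₂ : lexLt y z) : lexLt x z :=
  lt_trans (α := Lex Sigma2) h₁ h₂

theorem lexLt.not_lexLe (h : lexLt x y) : ¬ lexLe y x := _root_.not_lexLe.2 h

theorem eq_const_true_of_lexLe (h : lexLe (fun _ => true) x) : x = fun _ => true :=
  (top_le_iff (α := Lex Sigma2)).1 h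

end LexOrder

def periodize (N : ℕ) (x : Sigma2) : Sigma2 := fun m => x (m % N)

section Periodize

variable {N : ℕ} {x y z : Sigma2}

theorem periodize_apply_of_lt {m : ℕ} (hm : m < N) : periodize N x m = x m :=
  congrArg x (Nat.mod_eq_of_lt hm)

theorem shift_iterate_periodize (n : ℕ) :
    shift^[n] (periodize N x) = shift^[n % N] (periodize N x) := by
  funext m
  simp only [shift_iterate_apply, periodize, Nat.add_mod_mod]

theorem perSeq_ofFn (hN : 0 < N) : perSeq (List.ofFn fun i : Fin N => x i) = periodize N x := by
  funext m
  have hm : m % N < (List.ofFn fun i : Fin N => x i).length := by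
    simpa using Nat.mod_lt m hN
  simp only [perSeq, List.length_ofFn]
  rw [List.getD_eq_getElem _ _ hm, List.getElem_ofFn]
  rfl

/-- If `x ≼ σᴺ x`, then at the first place `k` where `x` falls below its `N`-periodization,
`σᴺ x` already falls below `x` at `k - N`. -/
theorem periodize_lexLe (hN : 0 < N) (h : lexLe x (shift^[N] x)) : lexLe (periodize N x) x := by
  by_contra hc
  obtain ⟨k, hagree, hk⟩ := not_lexLe.1 hc
  have hNk : N ≤ k := by
    by_contra! hkN
    exact lt_irrefl _ (periodize_apply_of_lt hkN ▸ hk)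
  refine (show lexLt (shift^[N] x) x from ⟨k - N, fun i hi => ?_, ?_⟩).not_lexLe h
  · rw [shift_iterate_apply, hagree (i + N) (by omega), hagree i (by omega)]
    simp [periodize]
  · have hmod : (k - N) % N = k % N := by
      rw [← Nat.add_mod_right (k - N) N, Nat.sub_add_cancel hNk]
    rw [shift_iterate_apply, Nat.sub_add_cancel hNk, hagree (k - N) (by omega), periodize, hmod]
    exact hk

theorem exists_lexLt_shift_iterate_of_periodize_lexLt (hN : 0 < N) (h : lexLt (periodize N x) z) :
    ∃ s, lexLt x (shift^[s] z) := by
  obtain ⟨k, hagree, hk⟩ := h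
  have hk_eq := Nat.mod_add_div k N
  refine ⟨N * (k / N), k % N, fun i hi => ?_, ?_⟩
  · rw [shift_iterate_apply, ← hagree _ (by omega), periodize, Nat.add_mul_mod_self_left,
      Nat.mod_eq_of_lt (hi.trans (Nat.mod_lt k hN))]
  · rwa [shift_iterate_apply, hk_eq]

theorem lexLe_periodize_of_forall_lexLe (hN : 0 < N) (h : ∀ n, lexLe (shift^[n] y) x) (n : ℕ) :
    lexLe (shift^[n] y) (periodize N x) := by
  by_contra hc
  obtain ⟨s, hs⟩ := exists_lexLt_shift_iterate_of_periodize_lexLt hN (not_lexLe.1 hc)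
  rw [← iterate_add_apply] at hs
  exact hs.not_lexLe (h _)

end Periodize

section FirstReturn

variable {N j : ℕ} {x : Sigma2}

theorem exists_mismatch_before_period (hN : lexLe x (shift^[N] x))
    (hmin : ∀ s, 1 ≤ s → s < N → lexLt (shift^[s] x) x) (hj : 1 ≤ j) (hjN : j < N) :
    ∃ k, k + j < N ∧ (∀ i < k, x (i + j) = x i) ∧ x (k + j) = false ∧ x k = true := by
  obtain ⟨k, hagree, hk⟩ := hmin j hj hjN
  simp only [shift_iterate_apply] at hagree hk
  obtain ⟨hkj, hk⟩ := Bool.lt_iff.1 hk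
  refine ⟨k, ?_, hagree, hkj, hk⟩
  by_contra! hge
  have hlt : lexLt (shift^[N] x) (shift^[N - j] x) := by
    refine ⟨k + j - N, fun i hi => ?_, ?_⟩
    · rw [shift_iterate_apply, shift_iterate_apply, ← hagree (i + (N - j)) (by omega)]
      congr 1
      omega
    · rw [shift_iterate_apply, shift_iterate_apply, show k + j - N + N = k + j by omega,
        show k + j - N + (N - j) = k by omega, hkj, hk]
      decide
  exact (hlt.trans (hmin _ (by omega) (by omega))).not_lexLe hN

theorem parry_periodize (h0 : x 0 = true) (hpos : 0 < N) (hN : lexLe x (shift^[N] x))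
    (hmin : ∀ s, 1 ≤ s → s < N → lexLt (shift^[s] x) x) : Parry (periodize N x) := by
  refine ⟨by rwa [periodize_apply_of_lt hpos], fun n => ?_⟩
  rw [shift_iterate_periodize]
  rcases Nat.eq_zero_or_pos (n % N) with hr | hr
  · rw [hr]
    exact Or.inl rfl
  obtain ⟨k, hkN, hagree, hkj, hk⟩ := exists_mismatch_before_period hN hmin hr (Nat.mod_lt n hpos)
  refine Or.inr ⟨k, fun i hi => ?_, ?_⟩
  · rw [shift_iterate_apply, periodize_apply_of_lt (by omega), periodize_apply_of_lt (by omega),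
      hagree i hi]
  · rw [shift_iterate_apply, periodize_apply_of_lt hkN, periodize_apply_of_lt (by omega), hkj, hk]
    decide

end FirstReturn

section NAlpha

variable {α : Sigma2}

theorem exists_lexLe_shift_iterate (h0 : α 0 = true) (h : ¬ Parry α) :
    ∃ n, 1 ≤ n ∧ lexLe α (shift^[n] α) := by
  simp only [Parry, h0, true_and, not_forall] at h
  obtain ⟨n, hn⟩ := h
  have hn0 : n ≠ 0 := by
    rintro rfl
    exact hn (Or.inl rfl)
  exact ⟨n, Nat.one_le_iff_ne_zero.2 hn0, Or.inr (not_lexLe.1 hn)⟩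

theorem nAlpha_spec (h0 : α 0 = true) (h : ¬ Parry α) :
    1 ≤ nAlpha α ∧ lexLe α (shift^[nAlpha α] α) :=
  Nat.sInf_mem (exists_lexLe_shift_iterate h0 h)

theorem shift_iterate_lexLt_of_lt_nAlpha {n : ℕ} (hn : 1 ≤ n) (hnN : n < nAlpha α) :
    lexLt (shift^[n] α) α :=
  not_lexLe.1 fun hle => Nat.notMem_of_lt_sInf hnN ⟨hn, hle⟩

/-- If `σ α ≽ α`, then `α` dominates its `1`-periodization `1^∞`, the largest sequence,
so `α = 1^∞`, which is Parry. -/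
theorem two_le_nAlpha (h0 : α 0 = true) (h : ¬ Parry α) : 2 ≤ nAlpha α := by
  obtain ⟨hN1, hle⟩ := nAlpha_spec h0 h
  by_contra! hN
  rw [show nAlpha α = 1 by omega] at hle
  have hconst : periodize 1 α = fun _ => true := funext fun _ => by rwa [periodize, Nat.mod_one]
  have hα := eq_const_true_of_lexLe (hconst ▸ periodize_lexLe one_pos hle)
  subst hα
  exact h ⟨rfl, fun n => Or.inl (funext fun m => shift_iterate_apply n _ m)⟩

theorem varsigma_eq_periodize (hN : 1 ≤ nAlpha α) (hlast : α (nAlpha α - 1) = false) :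
    varsigma α = periodize (nAlpha α) α := by
  obtain ⟨M, hM⟩ : ∃ M, nAlpha α = M + 1 := ⟨_, (Nat.sub_add_cancel hN).symm⟩
  rw [← perSeq_ofFn (by omega), varsigma, hM, List.ofFn_succ', List.concat_eq_append, ← hlast, hM]
  simp

end NAlpha

/-- for `α` starting with 1 and not Parry, `ς(α)` is Parry and defines the
same one-sided lexicographic subshift. -/
theorem stmt15 (α : Sigma2) (h1 : α 0 = true) (h2 : ¬ Parry α) :
    Parry (varsigma α) ∧
    {x : Sigma2 | ∀ n, lexLe (shift^[n] x) α} =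
      {x : Sigma2 | ∀ n, lexLe (shift^[n] x) (varsigma α)} := by
  obtain ⟨hN, hNle⟩ := nAlpha_spec h1 h2
  have hmin : ∀ s, 1 ≤ s → s < nAlpha α → lexLt (shift^[s] α) α :=
    fun _ => shift_iterate_lexLt_of_lt_nAlpha
  have hlast : α (nAlpha α - 1) = false := by
    obtain ⟨k, hk, -, hkj, -⟩ := exists_mismatch_before_period hNle hmin
      (by have := two_le_nAlpha h1 h2; omega) (Nat.sub_lt hN one_pos)
    rwa [show k = 0 by omega, zero_add] at hkj
  rw [varsigma_eq_periodize hN hlast]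
  refine ⟨parry_periodize h1 hN hNle hmin, Set.ext fun y => ⟨fun hy => ?_, fun hy n => ?_⟩⟩
  · exact lexLe_periodize_of_forall_lexLe hN hy
  · exact (hy n).trans (periodize_lexLe hN hNle)
end
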